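/- Let n ≥ 1 and let R : Fin n → Fin n → Fin n → Fin n → ℂ, written R(α,β̄,γ,δ̄), be a Kähler-type curvature tensor (i.e. R(α,β̄,γ,δ̄) = R(γ,β̄,α,δ̄), R(α,β̄,γ,δ̄) = R(α,δ̄,γ,β̄), and conj(R(α,β̄,γ,δ̄)) = R(β,ᾱ,δ,γ̄)) which is strongly semi-negative in the sense of Siu. Let m ≥ 1, let H be an m×m Hermitian positive-definite complex matrix, and let u, w : Fin n → Fin m → ℂ be arbitrary. Then the complex number S = ∑_{ρ,δ,γ,β ∈ Fin n} ∑_{i,j,k,l ∈ Fin m} R(ρ,δ̄,γ,β̄) · w(ρ,j) · conj(u(β,l)) · (u(γ,i)·conj(w(δ,k)) − u(γ,k)·conj(w(δ,i))) · H(i,l) · H(k,j) is real and satisfies 0 ≤ S. (This is the pointwise curvature inequality proved at the start of Section 4, with u(γ,i) = f^γ_i, w(ρ,j) = f^ρ_{j̄}, and H(i,l) = h^{i l̄} the inverse Levi form.) -/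

import Mathlib

/-!
Factor the positive semidefinite matrix as `H = Bᴴ B`. Replacing `u(γ, ·)` by `u(γ, ·) Bᴴ` and
`w(ρ, ·)` by `B w(ρ, ·)` turns both contractions with `H` into plain dot products. For fixed
`α, β, γ, δ` the Binet–Cauchy identity then writes twice the resulting expression as a sum over
`s, t` of products of `2 × 2` minors, and after the symmetry in the second and fourth indices of
`R` this exhibits `2 S` as the sum over `s, t` of Siu's form evaluated at
`A = w(·, t), B = u(·, s), C = w(·, s), D = u(·, t)`, each term of which is nonnegative.
-/

open Finset Matrix ComplexOrder ComplexConjugate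

variable {ι ι' κ : Type*} [Fintype ι] [Fintype ι'] [Fintype κ]

theorem binet_cauchy_identity {R : Type*} [CommRing R] (a b c d : ι → R) :
    ∑ s, ∑ t, (d t * b s - d s * b t) * (c t * a s - c s * a t) =
      2 * ((a ⬝ᵥ b) * (c ⬝ᵥ d) - (c ⬝ᵥ b) * (a ⬝ᵥ d)) := by
  have expand : ∀ s t, (d t * b s - d s * b t) * (c t * a s - c s * a t) =
      a s * b s * (c t * d t) - c s * b s * (a t * d t) - a s * d s * (c t * b t) +
        c s * d s * (a t * b t) := fun s t => by ring
  simp only [expand, sum_add_distrib, sum_sub_distrib, ← mul_sum, ← sum_mul, dotProduct]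
  ring

theorem dotProduct_mulVec_mul_dotProduct_mulVec {R : Type*} [CommSemiring R]
    (H : Matrix ι ι R) (x y x' y' : ι → R) :
    (x ⬝ᵥ H *ᵥ y) * (x' ⬝ᵥ H *ᵥ y') =
      ∑ i, ∑ j, ∑ k, ∑ l, x i * y l * (x' k * y' j) * H i l * H k j := by
  rw [dotProduct, dotProduct, sum_mul_sum]
  simp only [mulVec, dotProduct, mul_sum, sum_mul]
  refine sum_congr rfl fun i _ => ?_
  rw [sum_comm]
  refine sum_congr rfl fun j _ => sum_congr rfl fun k _ => sum_congr rfl fun l _ => ?_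
  ring

theorem Matrix.PosSemidef.exists_eq_conjTranspose_mul_self {n 𝕜 : Type*} [Fintype n]
    [DecidableEq n] [RCLike 𝕜] {A : Matrix n n 𝕜} (hA : A.PosSemidef) :
    ∃ B : Matrix n n 𝕜, A = Bᴴ * B := by
  open MatrixOrder in
  exact CStarAlgebra.nonneg_iff_eq_star_mul_self.mp hA.nonneg

def siuForm (R : κ → κ → κ → κ → ℂ) (A B C D : κ → ℂ) : ℂ :=
  ∑ α, ∑ β, ∑ γ, ∑ δ, R α β γ δ * (A α * conj (B β) - C α * conj (D β)) *
    conj (A δ * conj (B γ) - C δ * conj (D γ))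

def curvatureTerm (R : κ → κ → κ → κ → ℂ) (H : Matrix ι ι ℂ) (u w : κ → ι → ℂ) : ℂ :=
  ∑ ρ, ∑ δ, ∑ γ, ∑ β, ∑ i, ∑ j, ∑ k, ∑ l,
    R ρ δ γ β * w ρ j * conj (u β l) *
      (u γ i * conj (w δ k) - u γ k * conj (w δ i)) * H i l * H k j

variable (R : κ → κ → κ → κ → ℂ)

theorem sum_sum_siuForm (u w : κ → ι → ℂ) :
    ∑ s, ∑ t, siuForm R (fun α => w α t) (fun β => u β s) (fun α => w α s) (fun β => u β t) =
      2 * ∑ α, ∑ β, ∑ γ, ∑ δ, R α β γ δ *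
        ((u γ ⬝ᵥ star (u β)) * (star (w δ) ⬝ᵥ w α) -
          (star (w δ) ⬝ᵥ star (u β)) * (u γ ⬝ᵥ w α)) := by
  simp only [siuForm, mul_sum]
  simp_rw [sum_comm (s := (univ : Finset ι)) (t := (univ : Finset κ)) (β := ℂ)]
  refine sum_congr rfl fun α _ => sum_congr rfl fun β _ => sum_congr rfl fun γ _ =>
    sum_congr rfl fun δ _ => ?_
  rw [mul_left_comm, ← binet_cauchy_identity, mul_sum]
  refine sum_congr rfl fun s _ => ?_
  rw [mul_sum]
  refine sum_congr rfl fun t _ => ?_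
  simp only [map_sub, map_mul, Complex.conj_conj, Pi.star_apply, RCLike.star_def]
  ring

theorem curvatureTerm_eq_sum_dotProduct (H : Matrix ι ι ℂ) (u w : κ → ι → ℂ) :
    curvatureTerm R H u w = ∑ ρ, ∑ δ, ∑ γ, ∑ β, R ρ δ γ β *
      ((u γ ⬝ᵥ H *ᵥ star (u β)) * (star (w δ) ⬝ᵥ H *ᵥ w ρ) -
        (star (w δ) ⬝ᵥ H *ᵥ star (u β)) * (u γ ⬝ᵥ H *ᵥ w ρ)) := by
  simp only [curvatureTerm, dotProduct_mulVec_mul_dotProduct_mulVec, ← sum_sub_distrib, mul_sum]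
  congr! 8
  simp only [Pi.star_apply, RCLike.star_def]
  ring

theorem curvatureTerm_conjTranspose_mul_mul (H : Matrix ι' ι' ℂ) (B : Matrix ι' ι ℂ)
    (u w : κ → ι → ℂ) :
    curvatureTerm R (Bᴴ * H * B) u w =
      curvatureTerm R H (fun γ => u γ ᵥ* Bᴴ) (fun ρ => B *ᵥ w ρ) := by
  have dotProduct_conj : ∀ x y, x ⬝ᵥ (Bᴴ * H * B) *ᵥ y = (x ᵥ* Bᴴ) ⬝ᵥ H *ᵥ (B *ᵥ y) := by
    intro x y
    rw [← mulVec_mulVec, ← mulVec_mulVec, dotProduct_mulVec]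
  simp only [curvatureTerm_eq_sum_dotProduct, dotProduct_conj, star_mulVec, star_vecMul,
    conjTranspose_conjTranspose]

theorem two_mul_curvatureTerm_one [DecidableEq ι] (hsym24 : ∀ α β γ δ, R α β γ δ = R α δ γ β)
    (u w : κ → ι → ℂ) :
    2 * curvatureTerm R 1 u w =
      ∑ s, ∑ t, siuForm R (fun α => w α t) (fun β => u β s) (fun α => w α s) (fun β => u β t) := by
  rw [sum_sum_siuForm, curvatureTerm_eq_sum_dotProduct]
  simp only [one_mulVec]
  congr 1
  refine sum_congr rfl fun α _ => ?_
  rw [sum_comm_cycle]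
  refine sum_congr rfl fun β _ => ?_
  rw [sum_comm]
  simp only [← hsym24]

theorem curvatureTerm_nonneg [DecidableEq ι] (hsym24 : ∀ α β γ δ, R α β γ δ = R α δ γ β)
    (hneg : ∀ A B C D, 0 ≤ siuForm R A B C D) {H : Matrix ι ι ℂ} (hH : H.PosSemidef)
    (u w : κ → ι → ℂ) : 0 ≤ curvatureTerm R H u w := by
  obtain ⟨B, rfl⟩ := hH.exists_eq_conjTranspose_mul_self
  rw [← Matrix.mul_one Bᴴ, curvatureTerm_conjTranspose_mul_mul]
  refine le_of_mul_le_mul_left ?_ (two_pos : (0 : ℂ) < 2)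
  rw [mul_zero, two_mul_curvatureTerm_one R hsym24]
  exact sum_nonneg fun s _ => sum_nonneg fun t _ => hneg _ _ _ _

theorem siu_pointwise_curvature_inequality_general
    (n m : ℕ)
    (R : Fin n → Fin n → Fin n → Fin n → ℂ)
    -- Kähler symmetries of the curvature tensor
    (hsym24 : ∀ α β γ δ, R α β γ δ = R α δ γ β)
    -- strong semi-negativity in the sense of Siu
    (hneg : ∀ A B C D : Fin n → ℂ,
      0 ≤ ∑ α, ∑ β, ∑ γ, ∑ δ, R α β γ δ *
        (A α * starRingEnd ℂ (B β) - C α * starRingEnd ℂ (D β)) *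
        starRingEnd ℂ (A δ * starRingEnd ℂ (B γ) - C δ * starRingEnd ℂ (D γ)))
    (H : Matrix (Fin m) (Fin m) ℂ)
    -- H is Hermitian positive definite
    (hH : ∀ i l, H l i = starRingEnd ℂ (H i l))
    (hHpos : ∀ v : Fin m → ℂ, v ≠ 0 → 0 < (star v ⬝ᵥ H.mulVec v).re)
    (u w : Fin n → Fin m → ℂ) :
    0 ≤ ∑ ρ, ∑ δ, ∑ γ, ∑ β, ∑ i, ∑ j, ∑ k, ∑ l,
      R ρ δ γ β * w ρ j * starRingEnd ℂ (u β l) *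
        (u γ i * starRingEnd ℂ (w δ k) - u γ k * starRingEnd ℂ (w δ i)) *
        H i l * H k j := by
  have hHerm : H.IsHermitian := IsHermitian.ext fun i j => (hH j i).symm
  have hPosDef : H.PosDef := .of_dotProduct_mulVec_pos hHerm fun x hx =>
    RCLike.pos_iff.mpr ⟨hHpos x hx, hHerm.im_star_dotProduct_mulVec_self x⟩
  exact curvatureTerm_nonneg R hsym24 hneg hPosDef.posSemidef u w

/-- For a Kähler-type curvature tensor `R` that is strongly semi-negative in the
sense of Siu, a Hermitian positive-definite matrix `H` (the inverse Levi form), and arbitrary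
families `u`, `w` (the components of `∂_b f` and `∂̄_b f`), the curvature term
`S = ∑ R(ρ,δ̄,γ,β̄) w(ρ,j) conj(u(β,l)) (u(γ,i) conj(w(δ,k)) − u(γ,k) conj(w(δ,i))) H(i,l) H(k,j)`
is real and nonnegative (expressed via the partial order on `ℂ`, where `0 ≤ S` means exactly
that `S` is real and `0 ≤ S.re`). -/
theorem siu_pointwise_curvature_inequality
    (n m : ℕ) (hn : 1 ≤ n) (hm : 1 ≤ m)
    (R : Fin n → Fin n → Fin n → Fin n → ℂ)
    -- Kähler symmetries of the curvature tensor
    (hsym13 : ∀ α β γ δ, R α β γ δ = R γ β α δ)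
    (hsym24 : ∀ α β γ δ, R α β γ δ = R α δ γ β)
    (hreal : ∀ α β γ δ, starRingEnd ℂ (R α β γ δ) = R β α δ γ)
    -- strong semi-negativity in the sense of Siu
    (hneg : ∀ A B C D : Fin n → ℂ,
      0 ≤ ∑ α, ∑ β, ∑ γ, ∑ δ, R α β γ δ *
        (A α * starRingEnd ℂ (B β) - C α * starRingEnd ℂ (D β)) *
        starRingEnd ℂ (A δ * starRingEnd ℂ (B γ) - C δ * starRingEnd ℂ (D γ)))
    (H : Matrix (Fin m) (Fin m) ℂ)
    -- H is Hermitian positive definite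
    (hH : ∀ i l, H l i = starRingEnd ℂ (H i l))
    (hHpos : ∀ v : Fin m → ℂ, v ≠ 0 → 0 < (star v ⬝ᵥ H.mulVec v).re)
    (u w : Fin n → Fin m → ℂ) :
    0 ≤ ∑ ρ, ∑ δ, ∑ γ, ∑ β, ∑ i, ∑ j, ∑ k, ∑ l,
      R ρ δ γ β * w ρ j * starRingEnd ℂ (u β l) *
        (u γ i * starRingEnd ℂ (w δ k) - u γ k * starRingEnd ℂ (w δ i)) *
        H i l * H k j :=
  siu_pointwise_curvature_inequality_general n m R hsym24 hneg H hH hHpos u w
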